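/- If s is a strong equilibrium with unique consistent run r, then (s, r) is an equilibrium: for every stage n, the induced strategy profile in the finite subgame starting at position r_{<n} is a Nash equilibrium of that subgame. -/

import Mathlib

/-- Stages: non-positive integers. -/
abbrev Stage : Type := {n : ℤ // n ≤ 0}

/-- A run assigns an action to each stage. -/
abbrev Run (A : Type) : Type := Stage → A

/-- A position at stage `n` records the actions at all stages `k < n`. -/
abbrev Position (A : Type) (n : ℤ) : Type := {k : ℤ // k < n} → A

/-- The space of all positions. -/
abbrev Pos (A : Type) : Type := Σ n : Stage, Position A n.1

/-- The position induced by a run `r` at stage `n`. -/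
def restrictRun {A : Type} (r : Run A) (n : Stage) : Position A n.1 :=
  fun k => r ⟨k.1, le_trans k.2.le n.2⟩

/-- A run `r` is consistent with a strategy profile `s` (with owner function `ι`). -/
def ConsistentP {I A : Type} (ι : Pos A → I) (s : I → Pos A → A) (r : Run A) : Prop :=
  ∀ n : Stage, r n = s (ι ⟨n, restrictRun r n⟩) ⟨n, restrictRun r n⟩

/-- `(s, r)` is an equilibrium: `r` is consistent with `s` and, for each stage `n`, the profile
`s` induces a Nash equilibrium in the finite subgame starting at the position of `r` at stage
`n`. The latter is expressed as: for every player `i` and every profile `s'` differing from `s`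
only in player `i`'s strategy, the run that agrees with `r` before stage `n` and follows `s'`
from stage `n` onward gives player `i` at most `u i r`. -/
def Equilibrium {I A : Type} (ι : Pos A → I) (u : I → Run A → ℝ)
    (s : I → Pos A → A) (r : Run A) : Prop :=
  ConsistentP ι s r ∧
  ∀ n : Stage, ∀ i : I, ∀ s' : I → Pos A → A, (∀ j : I, j ≠ i → s' j = s j) →
    ∀ r' : Run A, (∀ k : Stage, k.1 < n.1 → r' k = r k) →
      (∀ m : Stage, n.1 ≤ m.1 →
        r' m = s' (ι ⟨m, restrictRun r' m⟩) ⟨m, restrictRun r' m⟩) →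
      u i r' ≤ u i r

/-- `s` is a strong equilibrium with unique consistent run `r`: `r` is the unique run
consistent with `s`, and for every player `i` and every deviation `s'i` of her strategy, every
run consistent with the deviated profile gives player `i` at most `u i r`. -/
def StrongEquilibrium {I A : Type} [DecidableEq I] (ι : Pos A → I) (u : I → Run A → ℝ)
    (s : I → Pos A → A) (r : Run A) : Prop :=
  ConsistentP ι s r ∧ (∀ r' : Run A, ConsistentP ι s r' → r' = r) ∧
  ∀ (i : I) (s'i : Pos A → A) (r' : Run A),
    ConsistentP ι (Function.update s i s'i) r' → u i r' ≤ u i r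

/-!
A deviation of player `i` in the subgame at `r_{<n}` extends to a deviation in the whole game:
play `s i` before stage `n` and the deviating strategy from stage `n` on. Since `r` follows `s`,
the deviating run of the subgame is consistent with this global deviation, so the strong
equilibrium property bounds its payoff by `u i r`.
-/

section

variable {I A : Type}

theorem restrictRun_congr {r r' : Run A} {n : Stage} (h : ∀ k : Stage, k.1 < n.1 → r' k = r k) :
    restrictRun r' n = restrictRun r n :=
  funext fun k => h _ k.2

def switchAt (n : Stage) (σ τ : Pos A → A) : Pos A → A :=
  fun p => if p.1.1 < n.1 then σ p else τ p

variable [DecidableEq I] {s s' : I → Pos A → A} {n : Stage} {i : I}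

theorem update_switchAt_of_lt (τ : Pos A → A) (j : I) {p : Pos A} (hp : p.1.1 < n.1) :
    Function.update s i (switchAt n (s i) τ) j p = s j p := by
  rcases eq_or_ne j i with rfl | hj
  · simp [switchAt, hp]
  · simp [hj]

theorem update_switchAt_of_le (hs' : ∀ j, j ≠ i → s' j = s j) (j : I) {p : Pos A}
    (hp : n.1 ≤ p.1.1) :
    Function.update s i (switchAt n (s i) (s' i)) j p = s' j p := by
  rcases eq_or_ne j i with rfl | hj
  · simp [switchAt, not_lt.2 hp]
  · simp [hj, hs' j hj]

theorem consistentP_update_switchAt {ι : Pos A → I} {r r' : Run A}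
    (hs' : ∀ j, j ≠ i → s' j = s j) (hr : ConsistentP ι s r)
    (hpre : ∀ k : Stage, k.1 < n.1 → r' k = r k)
    (hpost : ∀ m : Stage, n.1 ≤ m.1 →
      r' m = s' (ι ⟨m, restrictRun r' m⟩) ⟨m, restrictRun r' m⟩) :
    ConsistentP ι (Function.update s i (switchAt n (s i) (s' i))) r' := by
  intro k
  rcases lt_or_ge k.1 n.1 with hk | hk
  · rw [hpre k hk, restrictRun_congr fun m hm => hpre m (hm.trans hk),
      update_switchAt_of_lt _ _ hk]
    exact hr k
  · rw [update_switchAt_of_le hs' _ hk]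
    exact hpost k hk

end

theorem strong_equilibrium_is_equilibrium_general (I A : Type) [DecidableEq I]
    (ι : Pos A → I) (u : I → Run A → ℝ)
    (s : I → Pos A → A) (r : Run A) (h : StrongEquilibrium ι u s r) :
    Equilibrium ι u s r := by
  obtain ⟨hr, -, hdev⟩ := h
  exact ⟨hr, fun n i s' hs' r' hpre hpost =>
    hdev i _ r' (consistentP_update_switchAt hs' hr hpre hpost)⟩

/-- a strong equilibrium `s` with unique consistent run `r` yields an
equilibrium `(s, r)`. -/
theorem strong_equilibrium_is_equilibrium (I A : Type) [Fintype I] [Nonempty I] [DecidableEq I]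
    [Fintype A] [Nonempty A] (ι : Pos A → I) (u : I → Run A → ℝ)
    (hbd : ∀ i : I, ∃ C : ℝ, ∀ r : Run A, |u i r| ≤ C)
    (s : I → Pos A → A) (r : Run A) (h : StrongEquilibrium ι u s r) :
    Equilibrium ι u s r :=
  strong_equilibrium_is_equilibrium_general I A ι u s r h
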